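/- Let Q ⊆ {1,...,2^h} be a set of query positions and H the set of tree levels containing lowest common ancestors of pairs of queries in Q. Conditioned on the randomly chosen level k satisfying k ∉ H and k−1 ∉ H, the distributions D_Y and D_N induce exactly the same distribution over the outcomes of querying the positions in Q. -/

import Mathlib

/-- The 4-letter alphabet `Σ = {0, 1, P, F}` of the balancing formula. -/
inductive Sig4 where
  | zero | one | P | F
deriving DecidableEq

/-- The balancing gate. -/
def bgate : Sig4 → Sig4 → Sig4
  | .zero, .zero => .zero
  | .one, .one => .one
  | .one, .zero => .P
  | .zero, .one => .P
  | .P, .P => .P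
  | _, _ => .F

/-- The value computed at the root of the balancing formula of height `h`
on the Boolean input `a` (read at positions `0, …, 2^h - 1`). -/
def balEval : ℕ → (ℕ → Bool) → Sig4
  | 0, a => if a 0 then .one else .zero
  | h + 1, a => bgate (balEval h a) (balEval h (fun i => a (i + 2 ^ h)))

/-- The number of `1`-values among the first `m` positions of `a`. -/
def ones (m : ℕ) (a : ℕ → Bool) : ℕ :=
  ((Finset.range m).filter (fun j => a j = true)).card

/-- The eight quadruple patterns of `D_N`: `c < 4` gives the pattern with a
single `1` in position `c`; `c ≥ 4` gives the pattern with a single `0` in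
position `c - 4`. -/
def patN (c : Fin 8) (j : ℕ) : Bool :=
  if c.val < 4 then decide (j = c.val) else decide (j ≠ c.val - 4)

/-- The assignment produced by `D_Y` at level `k` from the random bits `y`. -/
def aY (h k : ℕ) (y : Fin (2 ^ (h - k)) → Bool) (n : ℕ) : Bool :=
  if hn : n / 2 ^ k < 2 ^ (h - k) then
    (if n % 2 ^ k < 2 ^ (k - 1) then y ⟨n / 2 ^ k, hn⟩ else !(y ⟨n / 2 ^ k, hn⟩))
  else false

/-- The assignment produced by `D_N` at level `k` from the random patterns `z`. -/
def aN (h k : ℕ) (z : Fin (2 ^ (h - k)) → Fin 8) (n : ℕ) : Bool :=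
  if hn : n / 2 ^ k < 2 ^ (h - k) then patN (z ⟨n / 2 ^ k, hn⟩) (n % 2 ^ k / 2 ^ (k - 2))
  else false

/-- The level (counted from the leaves, which are at level `0`) of the lowest
common ancestor of the leaf positions `q` and `q'` in the complete binary tree. -/
noncomputable def lcaLevel (q q' : ℕ) : ℕ := sInf {l : ℕ | q / 2 ^ l = q' / 2 ^ l}

/-!
If no two queries have their lowest common ancestor at level `k` or `k - 1`, then two queries in
the same block of size `2^k` have it at level at most `k - 2`, so they lie in the same quarter of
the block. Hence under both distributions all queries of block `b` receive one and the same bit,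
computed from the block's random seed and the block's common quarter `t b`: `y b xor [2 ≤ t b]`
under `D_Y` and `patN (z b) (t b)` under `D_N`. For every value of `t b` this bit is uniform
(every position is `1` in exactly four of the eight patterns), and the seeds of distinct blocks are
independent, so both answer distributions are the image of independent uniform bits on the blocks.
-/

namespace PMF

variable {α β γ ι : Type*}

theorem map_uniformOfFintype_of_card_fiber [Fintype α] [Nonempty α] [Fintype β] [Nonempty β]
    (f : α → β) (hf : ∀ b, Nat.card {a // f a = b} * Nat.card β = Nat.card α) :
    (uniformOfFintype α).map f = uniformOfFintype β := by
  classical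
  ext b
  rw [map_apply, tsum_fintype]
  simp only [uniformOfFintype_apply]
  rw [Finset.sum_ite, Finset.sum_const_zero, add_zero, Finset.sum_const, nsmul_eq_mul]
  have hb := hf b
  simp only [Nat.card_eq_fintype_card, Fintype.card_subtype] at hb
  simp only [eq_comm (a := b)]
  generalize (Finset.univ.filter fun a => f a = b).card = c at hb ⊢
  have hc : c ≠ 0 := by
    have := Fintype.card_pos (α := α)
    rintro rfl
    omega
  rw [← hb, Nat.cast_mul, ENNReal.mul_inv (by simp) (by simp), ← mul_assoc,
    ENNReal.mul_inv_cancel (by simpa using hc) (by simp), one_mul]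

theorem map_pi_uniformOfFintype_of_card_fiber [Fintype ι] [DecidableEq ι] [Fintype γ]
    [Nonempty γ] [Fintype β] [Nonempty β] (g : ι → γ → β)
    (hg : ∀ i b, Nat.card {c // g i c = b} * Nat.card β = Nat.card γ) :
    (uniformOfFintype (ι → γ)).map (fun z i => g i (z i)) = uniformOfFintype (ι → β) := by
  refine map_uniformOfFintype_of_card_fiber _ fun w => ?_
  have hfiber : Nat.card {z : ι → γ // (fun i => g i (z i)) = w}
      = ∏ i, Nat.card {c // g i c = w i} := by
    rw [← Nat.card_pi]
    exact Nat.card_congr <|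
      (Equiv.subtypeEquivRight fun z => funext_iff).trans
        (Equiv.subtypePiEquivPi (p := fun i c => g i c = w i))
  rw [hfiber, Nat.card_fun, Nat.card_fun, Nat.card_eq_fintype_card (α := ι), ← Finset.card_univ,
    ← Finset.prod_const, ← Finset.prod_const, ← Finset.prod_mul_distrib]
  exact Finset.prod_congr rfl fun i _ => hg i (w i)

theorem map_pi_uniformOfFintype_comp_of_card_fiber [Fintype ι]
    [DecidableEq ι] [Fintype γ] [Nonempty γ] [Fintype β] [Nonempty β] (g : ι → γ → β)
    (hg : ∀ i b, Nat.card {c // g i c = b} * Nat.card β = Nat.card γ) (block : α → ι) :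
    (uniformOfFintype (ι → γ)).map (fun z a => g (block a) (z (block a))) =
      (uniformOfFintype (ι → β)).map (fun w a => w (block a)) := by
  rw [← map_pi_uniformOfFintype_of_card_fiber g hg, map_comp]
  rfl

end PMF

theorem div_two_pow_eq_iff_lcaLevel_le {q q' l : ℕ} :
    q / 2 ^ l = q' / 2 ^ l ↔ lcaLevel q q' ≤ l := by
  refine ⟨fun hl => Nat.sInf_le hl, fun hl => ?_⟩
  have hlt : ∀ n ≤ q + q', n < 2 ^ (q + q') := fun n hn =>
    n.lt_two_pow_self.trans_le (Nat.pow_le_pow_right two_pos hn)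
  have hlca : q / 2 ^ lcaLevel q q' = q' / 2 ^ lcaLevel q q' :=
    Nat.sInf_mem (s := {l | q / 2 ^ l = q' / 2 ^ l}) ⟨q + q',
      show q / _ = q' / _ by
        rw [Nat.div_eq_of_lt (hlt q (by omega)), Nat.div_eq_of_lt (hlt q' (by omega))]⟩
  obtain ⟨d, rfl⟩ := Nat.exists_eq_add_of_le hl
  rw [pow_add, ← Nat.div_div_eq_div_mul, ← Nat.div_div_eq_div_mul, hlca]

theorem div_two_pow_lt_two_pow_sub {q h : ℕ} (k : ℕ) (hq : q < 2 ^ h) :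
    q / 2 ^ k < 2 ^ (h - k) := by
  refine Nat.div_lt_of_lt_mul (hq.trans_le ?_)
  rw [← pow_add]
  exact Nat.pow_le_pow_right two_pos (by omega)

def blockQuarter (k n : ℕ) : ℕ := n % 2 ^ k / 2 ^ (k - 2)

theorem blockQuarter_eq_div_mod {k : ℕ} (hk : 2 ≤ k) (n : ℕ) :
    blockQuarter k n = n / 2 ^ (k - 2) % 4 := by
  have hpow : 2 ^ k = 2 ^ (k - 2) * 4 := by
    rw [show (4 : ℕ) = 2 ^ 2 from rfl, ← pow_add, Nat.sub_add_cancel hk]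
  rw [blockQuarter, hpow, Nat.mod_mul_right_div_self]

theorem blockQuarter_eq_of_lcaLevel {k q q' : ℕ} (hk : 2 ≤ k) (hblock : q / 2 ^ k = q' / 2 ^ k)
    (hk0 : lcaLevel q q' ≠ k) (hk1 : lcaLevel q q' ≠ k - 1) :
    blockQuarter k q = blockQuarter k q' := by
  rw [div_two_pow_eq_iff_lcaLevel_le] at hblock
  rw [blockQuarter_eq_div_mod hk, blockQuarter_eq_div_mod hk,
    (div_two_pow_eq_iff_lcaLevel_le (q' := q')).2 (by omega)]

theorem aY_eq_xor {h k n : ℕ} (hk : 2 ≤ k) (y : Fin (2 ^ (h - k)) → Bool)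
    (hn : n / 2 ^ k < 2 ^ (h - k)) :
    aY h k y n = xor (y ⟨n / 2 ^ k, hn⟩) (decide (2 ≤ blockQuarter k n)) := by
  have hhalf : n % 2 ^ k < 2 ^ (k - 1) ↔ blockQuarter k n < 2 := by
    rw [blockQuarter, Nat.div_lt_iff_lt_mul (by positivity), ← pow_succ',
      show k - 2 + 1 = k - 1 by omega]
  rw [aY, dif_pos hn]
  by_cases hlow : n % 2 ^ k < 2 ^ (k - 1)
  · simp [hlow, not_le.2 (hhalf.1 hlow)]
  · simp [hlow, not_lt.1 (hhalf.not.1 hlow)]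

theorem card_xor_eq (s v : Bool) : Nat.card {c // xor c s = v} = 1 := by
  cases s <;> cases v <;> simp

theorem card_patN_eq (t : ℕ) (v : Bool) : Nat.card {c // patN c t = v} = 4 := by
  have hmin (c : Fin 8) : patN c t = patN c (min t 4) := by
    unfold patN
    split_ifs <;> simp only [decide_eq_decide] <;> omega
  have hsmall : ∀ t : Fin 5, ∀ v, Fintype.card {c // patN c t = v} = 4 := by decide
  simpa [hmin] using hsmall ⟨min t 4, by omega⟩ v

theorem DY_DN_indistinguishable_general (h k : ℕ) (hk2 : 2 ≤ k)
    (Q : Finset ℕ) (hQ : ∀ q ∈ Q, q < 2 ^ h)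
    (hH : ∀ q ∈ Q, ∀ q' ∈ Q, q ≠ q' →
      lcaLevel q q' ≠ k ∧ lcaLevel q q' ≠ k - 1) :
    PMF.map (fun y (q : Q) => aY h k y q.val)
        (PMF.uniformOfFintype (Fin (2 ^ (h - k)) → Bool)) =
    PMF.map (fun z (q : Q) => aN h k z q.val)
        (PMF.uniformOfFintype (Fin (2 ^ (h - k)) → Fin 8)) := by
  let block (q : Q) : Fin (2 ^ (h - k)) := ⟨q / 2 ^ k, div_two_pow_lt_two_pow_sub k (hQ q q.2)⟩
  have hfactors : Function.FactorsThrough (fun q : Q => blockQuarter k q) block := by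
    rintro ⟨q, hq⟩ ⟨q', hq'⟩ hblock
    by_cases hqq' : q = q'
    · subst hqq'
      rfl
    · obtain ⟨hk0, hk1⟩ := hH q hq q' hq' hqq'
      exact blockQuarter_eq_of_lcaLevel hk2 (Fin.mk.inj_iff.1 hblock) hk0 hk1
  set t := Function.extend block (fun q : Q => blockQuarter k q) 0
  have ht (q : Q) : t (block q) = blockQuarter k q := hfactors.extend_apply _ q
  have hY : (fun y (q : Q) => aY h k y q) =
      fun y q => xor (y (block q)) (decide (2 ≤ t (block q))) := by
    funext y q
    rw [ht, aY_eq_xor hk2]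
  have hN : (fun z (q : Q) => aN h k z q) = fun z q => patN (z (block q)) (t (block q)) := by
    funext z q
    rw [ht]
    exact dif_pos (div_two_pow_lt_two_pow_sub k (hQ q q.2))
  rw [hY, hN, PMF.map_pi_uniformOfFintype_comp_of_card_fiber (fun b c => xor c (decide (2 ≤ t b)))
      fun _ _ => by rw [card_xor_eq, one_mul],
    PMF.map_pi_uniformOfFintype_comp_of_card_fiber (fun b c => patN c (t b))
      fun _ _ => by rw [card_patN_eq]; simp]

/-- fix a level `2 ≤ k ≤ h` such that no lowest common
ancestor of two distinct queries of `Q` lies at level `k` or `k-1`. Then the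
distributions of the answers to the queries in `Q` under `D_Y` (conditioned on
this `k`) and under `D_N` (conditioned on this `k`) coincide. -/
theorem DY_DN_indistinguishable (h k : ℕ) (hk2 : 2 ≤ k) (hkh : k ≤ h)
    (Q : Finset ℕ) (hQ : ∀ q ∈ Q, q < 2 ^ h)
    (hH : ∀ q ∈ Q, ∀ q' ∈ Q, q ≠ q' →
      lcaLevel q q' ≠ k ∧ lcaLevel q q' ≠ k - 1) :
    PMF.map (fun y (q : Q) => aY h k y q.val)
        (PMF.uniformOfFintype (Fin (2 ^ (h - k)) → Bool)) =
    PMF.map (fun z (q : Q) => aN h k z q.val)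
        (PMF.uniformOfFintype (Fin (2 ^ (h - k)) → Fin 8)) :=
  DY_DN_indistinguishable_general h k hk2 Q hQ hH
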